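/- arXiv:2107.05419 — 2 statements merged into one kernel-verified Lean document; each statement's English description precedes it below -/
import Mathlib

section
/- Let T be an observation tree with nonempty basis S and frontier F, and assume the output alphabet O is nonempty. If the basis S is complete (δ^T(q, i) is defined for every q ∈ S, i ∈ I) and every state in F is identified (apart from all basis states except exactly one), then there is exactly one hypothesis H for T. -/
open scoped Classical

/-- A Mealy machine over input alphabet `I` and output alphabet `O`, with state
type `Q`, initial state `q0`, and a partial combined output/transition map
`trans : Q × I ⇀ O × Q` (so the output and transition functions are defined on
exactly the same pairs). -/
structure Mealy (Q I O : Type) where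
  q0 : Q
  trans : Q → I → Option (O × Q)

namespace Mealy

variable {Q Q' I O : Type}

/-- Extension of the combined output/transition map to input words. -/
def stepStar (M : Mealy Q I O) : Q → List I → Option (List O × Q)
  | q, [] => some ([], q)
  | q, i :: σ => (M.trans q i).bind fun p =>
      (stepStar M p.2 σ).map fun r => (p.1 :: r.1, r.2)

/-- `λ(q, σ)`: the output word produced from `q` on input word `σ` (if defined);
this is also the semantics `⟦q⟧ : I* ⇀ O*` of the state `q`. -/
def outStar (M : Mealy Q I O) (q : Q) (σ : List I) : Option (List O) :=
  (M.stepStar q σ).map Prod.fst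

/-- `δ(q, σ)`: the state reached from `q` on input word `σ` (if defined). -/
def delStar (M : Mealy Q I O) (q : Q) (σ : List I) : Option Q :=
  (M.stepStar q σ).map Prod.snd

/-- `σ ⊢ q # p`: the word `σ` witnesses apartness of `q` and `p`. -/
def ApartW (M : Mealy Q I O) (σ : List I) (q p : Q) : Prop :=
  (M.outStar q σ).isSome ∧ (M.outStar p σ).isSome ∧ M.outStar q σ ≠ M.outStar p σ

/-- `q # p`: states `q` and `p` are apart. -/
def Apart (M : Mealy Q I O) (q p : Q) : Prop := ∃ σ, M.ApartW σ q p

/-- `q ≈ r`: states `q` (of `M`) and `r` (of `N`) are equivalent, i.e. have equal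
semantics `⟦q⟧ = ⟦r⟧` as partial maps `I* ⇀ O*`. -/
def StateEquiv (M : Mealy Q I O) (N : Mealy Q' I O) (q : Q) (r : Q') : Prop :=
  ∀ σ, M.outStar q σ = N.outStar r σ

/-- A functional simulation `f : M → N`. -/
def FunSim (M : Mealy Q I O) (N : Mealy Q' I O) (f : Q → Q') : Prop :=
  f M.q0 = N.q0 ∧
    ∀ q i o q'', M.trans q i = some (o, q'') → N.trans (f q) i = some (o, f q'')

/-- A Mealy machine is complete if its transition map is total. -/
def Complete (M : Mealy Q I O) : Prop := ∀ q i, (M.trans q i).isSome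

/-- A Mealy machine is a tree if every state is reached from the root by a
unique input word (its access sequence). -/
def IsTree (M : Mealy Q I O) : Prop :=
  ∀ q : Q, ∃! σ : List I, M.delStar M.q0 σ = some q

/-- `S` is a basis of the observation tree `T`: a subtree containing the root
whose states are pairwise apart. -/
structure IsBasis (T : Mealy Q I O) (S : Set Q) : Prop where
  root_mem : T.q0 ∈ S
  subtree_closed : ∀ q i o q', T.trans q i = some (o, q') → q' ∈ S → q ∈ S
  pairwise_apart : ∀ p ∈ S, ∀ q ∈ S, p ≠ q → T.Apart p q

/-- The frontier `F`: immediate non-basis successors of basis states. -/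
def frontier (T : Mealy Q I O) (S : Set Q) : Set Q :=
  {q' | q' ∉ S ∧ ∃ q ∈ S, ∃ i o, T.trans q i = some (o, q')}

/-- The basis `S` is complete: each basis state has a transition for each input. -/
def BasisComplete (T : Mealy Q I O) (S : Set Q) : Prop :=
  ∀ q ∈ S, ∀ i : I, (T.trans q i).isSome

/-- A Mealy machine `H` with state set `S` contains the basis `S` of `T`:
`δ^H(q0^H, access(q)) = q` for every `q ∈ S`. -/
def ContainsBasis (T : Mealy Q I O) (S : Set Q) (H : Mealy ↥S I O) : Prop :=
  ∀ (q : ↥S) (σ : List I), T.delStar T.q0 σ = some (q : Q) → H.delStar H.q0 σ = some q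

/-- `H` is a hypothesis for the observation tree `T` with basis `S`. -/
def IsHypothesis (T : Mealy Q I O) (S : Set Q) (H : Mealy ↥S I O) : Prop :=
  H.Complete ∧ ContainsBasis T S H ∧
    ∀ (q : ↥S) (i : I) (o' : O) (p' : ↥S), H.trans q i = some (o', p') →
      ∀ (o : O) (p : Q), T.trans (q : Q) i = some (o, p) → o = o' ∧ ¬ T.Apart p (p' : Q)

/-- The equivalence `≈` on the states of a single machine, as a setoid. -/
def equivSetoid (M : Mealy Q I O) : Setoid Q :=
  ⟨fun q r => M.StateEquiv M q r,
   ⟨fun _ _ => rfl, fun h σ => (h σ).symm, fun h1 h2 σ => (h1 σ).trans (h2 σ)⟩⟩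

/-- `R` is a bisimulation between `M` and `N`. -/
def IsBisimulation (M : Mealy Q I O) (N : Mealy Q' I O) (R : Q → Q' → Prop) : Prop :=
  R M.q0 N.q0 ∧
    ∀ q r, R q r → ∀ i o q', M.trans q i = some (o, q') →
      ∃ r', N.trans r i = some (o, r') ∧ R q' r'

end Mealy

namespace Mealy

variable {Q Q' I O : Type}

theorem not_apart_self (M : Mealy Q I O) (q : Q) : ¬ M.Apart q q := by
  rintro ⟨σ, _, _, hne⟩
  exact hne rfl

theorem delStar_nil (M : Mealy Q I O) (q : Q) : M.delStar q [] = some q := rfl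

theorem delStar_cons (M : Mealy Q I O) (q : Q) (i : I) (σ : List I) :
    M.delStar q (i :: σ) = (M.trans q i).bind fun p => M.delStar p.2 σ := by
  cases h : M.trans q i with
  | none => simp [delStar, stepStar, h]
  | some r => cases h2 : M.stepStar r.2 σ <;> simp [delStar, stepStar, h, h2]

theorem basis_closed_path {T : Mealy Q I O} {S : Set Q} (hS : T.IsBasis S) :
    ∀ (σ : List I) (p q : Q), T.delStar p σ = some q → q ∈ S → p ∈ S := by
  intro σ
  induction σ with
  | nil => intro p q h hq; rw [delStar_nil] at h; cases h; exact hq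
  | cons i σ ih =>
    intro p q h hq
    rw [delStar_cons] at h
    cases ht : T.trans p i with
    | none => rw [ht] at h; simp at h
    | some r =>
      rw [ht] at h
      exact hS.subtree_closed p i r.1 r.2 (by rw [ht]) (ih r.2 q h hq)

end Mealy

/-- For an observation tree `T` with (nonempty) basis `S` and
frontier `F`, with `O` nonempty, if the basis is complete and every frontier
state is identified (apart from all basis states except exactly one), then
there is exactly one hypothesis `H` for `T`. -/
theorem statement_5 {Q I O : Type} [Fintype I] [Fintype Q] [Nonempty O]
    (T : Mealy Q I O) (htree : T.IsTree) (S : Set Q) (hS : T.IsBasis S)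
    (hcomp : T.BasisComplete S)
    (hident : ∀ p ∈ T.frontier S,
      ∃ b ∈ S, ¬ T.Apart p b ∧ ∀ b' ∈ S, b' ≠ b → T.Apart p b') :
    ∃! H : Mealy ↥S I O, T.IsHypothesis S H := by
  -- For each basis state and input, get the T-transition and the unique
  -- identified basis successor.
  have hkey : ∀ (q : ↥S) (i : I), ∃ (o : O) (p : Q) (b : ↥S),
      T.trans (q : Q) i = some (o, p) ∧ ¬ T.Apart p (b : Q) ∧
      (∀ b' ∈ S, ¬ T.Apart p b' → b' = (b : Q)) := by
    intro q i
    have hsome := hcomp (q : Q) q.2 i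
    obtain ⟨⟨o, p⟩, htr⟩ := Option.isSome_iff_exists.mp hsome
    by_cases hp : p ∈ S
    · refine ⟨o, p, ⟨p, hp⟩, htr, T.not_apart_self p, ?_⟩
      intro b' hb' hna
      by_contra hne
      exact hna (hS.pairwise_apart p hp b' hb' (fun h => hne h.symm))
    · have hpf : p ∈ T.frontier S := ⟨hp, (q : Q), q.2, i, o, htr⟩
      obtain ⟨b, hb, hna, huniq⟩ := hident p hpf
      refine ⟨o, p, ⟨b, hb⟩, htr, hna, ?_⟩
      intro b' hb' hna'
      by_contra hne
      exact hna' (huniq b' hb' hne)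
  choose oF pF bF hEq hNA hUniq using hkey
  -- If pF lands in S, then bF is exactly pF.
  have hbF_eq : ∀ (q : ↥S) (i : I), pF q i ∈ S → (bF q i : Q) = pF q i := by
    intro q i hp
    exact (hUniq q i (pF q i) hp (T.not_apart_self _)).symm
  set H : Mealy ↥S I O := ⟨⟨T.q0, hS.root_mem⟩, fun q i => some (oF q i, bF q i)⟩
    with hH
  have hHtrans : ∀ q i, H.trans q i = some (oF q i, bF q i) := fun _ _ => rfl
  -- H contains the basis.
  have hcontain : Mealy.ContainsBasis T S H := by
    have main : ∀ (σ : List I) (s : ↥S) (q : ↥S),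
        T.delStar (s : Q) σ = some (q : Q) → H.delStar s σ = some q := by
      intro σ
      induction σ with
      | nil =>
        intro s q h
        rw [Mealy.delStar_nil] at h
        cases h' : (Subtype.ext (Option.some.inj h) : s = q)
        exact Mealy.delStar_nil H s
      | cons i σ ih =>
        intro s q h
        rw [Mealy.delStar_cons, hEq s i] at h
        rw [Option.bind_some] at h
        have hpS : pF s i ∈ S := Mealy.basis_closed_path hS σ _ _ h q.2
        have hb : (bF s i : Q) = pF s i := hbF_eq s i hpS
        rw [Mealy.delStar_cons, hHtrans, Option.bind_some]
        exact ih (bF s i) q (by rw [hb]; exact h)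
    intro q σ hq
    exact main σ ⟨T.q0, hS.root_mem⟩ q hq
  have hhyp : T.IsHypothesis S H := by
    refine ⟨fun q i => by rw [hHtrans]; rfl, hcontain, ?_⟩
    intro q i o' p' htr o p htrT
    rw [hHtrans] at htr
    obtain ⟨ho', hp'⟩ := Prod.mk.injEq .. ▸ Option.some.inj htr
    have hop : o = oF q i ∧ p = pF q i := by
      have := (hEq q i).symm.trans htrT
      exact ⟨(Prod.mk.injEq .. ▸ Option.some.inj this).1.symm,
             (Prod.mk.injEq .. ▸ Option.some.inj this).2.symm⟩
    refine ⟨hop.1.trans ho', ?_⟩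
    rw [hop.2, ← hp']
    exact hNA q i
  refine ⟨H, hhyp, ?_⟩
  -- Uniqueness.
  intro H' ⟨hC', hB', hT'⟩
  have hq0 : H'.q0 = H.q0 := by
    have := hB' ⟨T.q0, hS.root_mem⟩ [] (Mealy.delStar_nil T T.q0)
    rw [Mealy.delStar_nil] at this
    exact Option.some.inj this
  have htrans : H'.trans = H.trans := by
    funext q i
    obtain ⟨⟨o', p'⟩, htr'⟩ := Option.isSome_iff_exists.mp (hC' q i)
    obtain ⟨ho, hna⟩ := hT' q i o' p' htr' (oF q i) (pF q i) (hEq q i)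
    have hp' : (p' : Q) = bF q i := hUniq q i (p' : Q) p'.2 hna
    rw [htr', hHtrans, ← ho, Subtype.ext hp']
  have hext : ∀ (A B : Mealy ↥S I O), A.q0 = B.q0 → A.trans = B.trans → A = B := by
    rintro ⟨a, fa⟩ ⟨b, fb⟩ h1 h2
    simp only [Mealy.mk.injEq]
    exact ⟨h1, h2⟩
  exact hext H' H hq0 htrans
end

section
/- Let T be an observation tree for a Mealy machine M (via a functional simulation f : T → M), and let P ⊆ Q^T be a set of pairwise apart states of T. Then |P| is at most the number of equivalence classes of the relation ≈ on Q^M. -/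
open scoped Classical

namespace Mealy

variable {Q Q' I O : Type} {M : Mealy Q I O} {N : Mealy Q' I O} {f : Q → Q'}

theorem FunSim.stepStar_eq (hf : M.FunSim N f) {q q' : Q} {σ : List I} {w : List O}
    (h : M.stepStar q σ = some (w, q')) : N.stepStar (f q) σ = some (w, f q') := by
  induction σ generalizing q w with
  | nil =>
    obtain ⟨rfl, rfl⟩ : [] = w ∧ q = q' := by simpa [stepStar] using h
    rfl
  | cons i σ ih =>
    simp only [stepStar, Option.bind_eq_some_iff, Option.map_eq_some_iff] at h ⊢
    obtain ⟨⟨o, p⟩, htrans, ⟨w', r⟩, hrest, hw⟩ := h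
    obtain ⟨rfl, rfl⟩ : o :: w' = w ∧ r = q' := by simpa using hw
    exact ⟨(o, f p), hf.2 q i o p htrans, (w', f r), ih hrest, rfl⟩

theorem FunSim.outStar_eq (hf : M.FunSim N f) {q : Q} {σ : List I}
    (h : (M.outStar q σ).isSome) : N.outStar (f q) σ = M.outStar q σ := by
  obtain ⟨⟨w, q'⟩, hstep⟩ := Option.isSome_iff_exists.mp (Option.isSome_map.symm.trans h)
  simp [outStar, hstep, hf.stepStar_eq hstep]

theorem FunSim.apart (hf : M.FunSim N f) {p q : Q} (h : M.Apart p q) : N.Apart (f p) (f q) := by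
  obtain ⟨σ, hp, hq, hne⟩ := h
  refine ⟨σ, ?_, ?_, ?_⟩ <;> simpa only [hf.outStar_eq hp, hf.outStar_eq hq]

theorem Apart.not_stateEquiv {p q : Q} (h : M.Apart p q) : ¬ M.StateEquiv M p q := by
  obtain ⟨σ, -, -, hne⟩ := h
  exact fun heq => hne (heq σ)

end Mealy

theorem statement_7_general {QT QM I O : Type} [Fintype QM]
    (T : Mealy QT I O) (M : Mealy QM I O)
    (f : QT → QM) (hf : T.FunSim M f)
    (P : Set QT) (hP : ∀ p ∈ P, ∀ q ∈ P, p ≠ q → T.Apart p q) :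
    Nat.card ↥P ≤ Nat.card (Quotient M.equivSetoid) := by
  refine Nat.card_le_card_of_injective (fun p : P => ⟦f p⟧) ?_
  rintro ⟨p, hp⟩ ⟨q, hq⟩ hpq
  by_contra hne
  exact (hf.apart (hP p hp q hq (by simpa using hne))).not_stateEquiv (Quotient.exact hpq)

/-- If `T` is an observation tree for `M` (via a functional
simulation `f : T → M`) and `P ⊆ Q^T` is a set of pairwise apart states, then
`|P|` is at most the number of equivalence classes of `≈` on `Q^M`. -/
theorem statement_7 {QT QM I O : Type} [Fintype I] [Fintype QT] [Fintype QM]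
    (T : Mealy QT I O) (M : Mealy QM I O) (htree : T.IsTree)
    (f : QT → QM) (hf : T.FunSim M f)
    (P : Set QT) (hP : ∀ p ∈ P, ∀ q ∈ P, p ≠ q → T.Apart p q) :
    Nat.card ↥P ≤ Nat.card (Quotient M.equivSetoid) :=
  statement_7_general T M f hf P hP
end
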